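/- arXiv:2109.04971 — 3 statements merged into one kernel-verified Lean document; each statement's English description precedes it below -/
import Mathlib

section
/- Let P: cl(B) → ℝ² be a continuous map, where B ⊆ ℝ² is an open set homeomorphic to an open ball with cl(B) homeomorphic to the closed ball. If for every x ∈ ∂B one has P(x) ∈ cl(B) \ {x}, then the Brouwer degree deg(P − id, B, 0) equals 1. -/
noncomputable section

open Set Metric Bornology

/-- Clockwise polar coordinates `Ψ(θ, r) = (r cos θ, -r sin θ)`. -/
def PsiP (p : ℝ × ℝ) : ℝ × ℝ := (p.2 * Real.cos p.1, -(p.2 * Real.sin p.1))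

/-- The set `Ψ⁻¹(E)` in the open half-plane (points with positive radius mapping into `E`). -/
def preE (E : Set (ℝ × ℝ)) : Set (ℝ × ℝ) := {p : ℝ × ℝ | 0 < p.2 ∧ PsiP p ∈ E}

/-- `F` is `2π`-periodic in the first variable, on `Ψ⁻¹(E)`. -/
def PerOn (F : ℝ × ℝ → ℝ × ℝ) (E : Set (ℝ × ℝ)) : Prop :=
  ∀ p : ℝ × ℝ, p ∈ preE E → F (p.1 + 2 * Real.pi, p.2) = F p

/-- The rotation set `rot(F, E) = {F^θ(y)/(2π) : y ∈ Ψ⁻¹(E)}`. -/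
def rotSet (F : ℝ × ℝ → ℝ × ℝ) (E : Set (ℝ × ℝ)) : Set ℝ :=
  {t : ℝ | ∃ p ∈ preE E, t = (F p).1 / (2 * Real.pi)}

/-- `Σ(F, E) = ℤ ∩ conv (rot(F, E))`. -/
def SigmaSet (F : ℝ × ℝ → ℝ × ℝ) (E : Set (ℝ × ℝ)) : Set ℤ :=
  {n : ℤ | (n : ℝ) ∈ convexHull ℝ (rotSet F E)}

/-- `ν_i = (2πi, 0)`. -/
def nu (i : ℤ) : ℝ × ℝ := (2 * Real.pi * i, 0)

/-- A Brouwer degree theory on the plane, characterized by the classical axioms: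
normalization, dependence only on boundary values, homotopy invariance, additivity,
and the solution property. -/
structure DegTheory where
  deg : (ℝ × ℝ → ℝ × ℝ) → Set (ℝ × ℝ) → ℝ × ℝ → ℤ
  deg_id : ∀ (U : Set (ℝ × ℝ)) (v : ℝ × ℝ), IsOpen U → IsBounded U → v ∈ U →
    deg id U v = 1
  deg_congr : ∀ (g₁ g₂ : ℝ × ℝ → ℝ × ℝ) (U : Set (ℝ × ℝ)) (v : ℝ × ℝ),
    IsOpen U → IsBounded U → ContinuousOn g₁ (closure U) → ContinuousOn g₂ (closure U) →
    (∀ x ∈ frontier U, g₁ x = g₂ x) → (∀ x ∈ frontier U, g₁ x ≠ v) →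
    deg g₁ U v = deg g₂ U v
  deg_homotopy : ∀ (H : (ℝ × ℝ) × ℝ → ℝ × ℝ) (U : Set (ℝ × ℝ)) (v : ℝ × ℝ),
    IsOpen U → IsBounded U →
    ContinuousOn H ((closure U) ×ˢ Icc (0:ℝ) 1) →
    (∀ x ∈ frontier U, ∀ t ∈ Icc (0:ℝ) 1, H (x, t) ≠ v) →
    deg (fun x => H (x, 0)) U v = deg (fun x => H (x, 1)) U v
  deg_additive : ∀ (g : ℝ × ℝ → ℝ × ℝ) (U U₁ U₂ : Set (ℝ × ℝ)) (v : ℝ × ℝ),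
    IsOpen U → IsOpen U₁ → IsOpen U₂ → IsBounded U →
    U₁ ⊆ U → U₂ ⊆ U → Disjoint U₁ U₂ → ContinuousOn g (closure U) →
    (∀ x ∈ closure U \ (U₁ ∪ U₂), g x ≠ v) →
    deg g U v = deg g U₁ v + deg g U₂ v
  deg_exists : ∀ (g : ℝ × ℝ → ℝ × ℝ) (U : Set (ℝ × ℝ)) (v : ℝ × ℝ),
    IsOpen U → IsBounded U → ContinuousOn g (closure U) →
    deg g U v ≠ 0 → ∃ x ∈ U, g x = v

/-- `g : ℝ² → ℝ²` represents `F_ext ∘ Ψ⁻¹` for an admissible extension `F_ext` of `F`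
(`F` being defined on `Ψ⁻¹(∂U)`): `g` is continuous on the plane and agrees with
`F ∘ Ψ⁻¹` on `∂U`.  (Via `F_ext = g ∘ Ψ`, this is equivalent to the existence of a
continuous extension `F_ext` of `F` to the closed half-plane which is `2π`-periodic in
the first variable and constant on the line `r = 0`.) -/
def IsDExt (F : ℝ × ℝ → ℝ × ℝ) (U : Set (ℝ × ℝ)) (g : ℝ × ℝ → ℝ × ℝ) : Prop :=
  Continuous g ∧ ∀ p : ℝ × ℝ, p ∈ preE (frontier U) → g (PsiP p) = F p

/-- Euclidean open ball of radius `ρ` about the origin of the plane. -/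
def ball2 (ρ : ℝ) : Set (ℝ × ℝ) := {x : ℝ × ℝ | x.1 ^ 2 + x.2 ^ 2 < ρ ^ 2}

/-- Euclidean circle of radius `ρ` about the origin of the plane. -/
def sphere2 (ρ : ℝ) : Set (ℝ × ℝ) := {x : ℝ × ℝ | x.1 ^ 2 + x.2 ^ 2 = ρ ^ 2}

/-- Euclidean norm on the plane. -/
def sqnorm (x : ℝ × ℝ) : ℝ := Real.sqrt (x.1 ^ 2 + x.2 ^ 2)

/-- `Φ` is the (unique) lift, through the clockwise polar coordinates `Ψ`, of the
evolution map `φ` on `[0,T] × Ψ⁻¹(S)`: it is continuous, starts from the identity,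
projects to `φ` via `Ψ`, stays in the open half-plane, and is equivariant under the
deck transformation `θ ↦ θ + 2π`. -/
def IsLiftOn (φ : ℝ → ℝ × ℝ → ℝ × ℝ) (Φ : ℝ → ℝ × ℝ → ℝ × ℝ) (T : ℝ)
    (S : Set (ℝ × ℝ)) : Prop :=
  ContinuousOn (fun q : ℝ × (ℝ × ℝ) => Φ q.1 q.2) (Icc 0 T ×ˢ preE S) ∧
  (∀ p ∈ preE S, Φ 0 p = p) ∧
  (∀ t ∈ Icc 0 T, ∀ p ∈ preE S,
    PsiP (Φ t p) = φ t (PsiP p) ∧ 0 < (Φ t p).2 ∧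
    Φ t (p.1 + 2 * Real.pi, p.2) = ((Φ t p).1 + 2 * Real.pi, (Φ t p).2))

/-- if `B` is an open set homeomorphic to an open ball (with closure
homeomorphic to the closed ball) and `P : cl(B) → ℝ²` is continuous, maps `∂B` into
`cl(B)` and has no fixed point on `∂B`, then `deg(P - id, B, 0) = 1`. -/
theorem statement4 (D : DegTheory) (B : Set (ℝ × ℝ)) (P : ℝ × ℝ → ℝ × ℝ)
    (hB : IsOpen B)
    (e : (ℝ × ℝ) ≃ₜ (ℝ × ℝ))
    (heB : e '' Metric.ball 0 1 = B)
    (heC : e '' Metric.closedBall 0 1 = closure B)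
    (hPc : ContinuousOn P (closure B))
    (hPb : ∀ x ∈ frontier B, P x ∈ closure B ∧ P x ≠ x) :
    D.deg (fun x => P x - x) B 0 = 1 := by
  classical
  set c : ℝ × ℝ := e 0 with hc
  have hcB : c ∈ B := by
    rw [← heB]; exact ⟨0, by simp, rfl⟩
  have hclB : closure B = e '' Metric.closedBall 0 1 := heC.symm
  have hfr : frontier B = e '' Metric.sphere 0 1 := by
    rw [hB.frontier_eq, hclB, ← heB, ← Set.image_diff e.injective,
        Metric.closedBall_diff_ball]
  have hsymm_fr : ∀ x ∈ frontier B, ‖e.symm x‖ = 1 := by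
    intro x hx
    rw [hfr] at hx
    obtain ⟨y, hy, rfl⟩ := hx
    simp only [Homeomorph.symm_apply_apply]
    simpa using hy
  have hsymm_cl : ∀ x ∈ closure B, ‖e.symm x‖ ≤ 1 := by
    intro x hx
    rw [hclB] at hx
    obtain ⟨y, hy, rfl⟩ := hx
    simp only [Homeomorph.symm_apply_apply]
    simpa using hy
  have hclC : IsCompact (closure B) := by
    rw [hclB]; exact (isCompact_closedBall _ _).image e.continuous
  have hbdd : IsBounded B := hclC.isBounded.subset subset_closure
  have hfrcl : frontier B ⊆ closure B := frontier_subset_closure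
  -- continuity of P on the first coordinate of a product
  have hPfst : ContinuousOn (fun q : (ℝ × ℝ) × ℝ => P q.1)
      (closure B ×ˢ Icc (0:ℝ) 1) :=
    hPc.comp continuousOn_fst (fun q hq => hq.1)
  -- Step 1 : rotation homotopy, deg (x - P x) = deg (P x - x)
  have step1 : D.deg (fun x => x - P x) B 0 = D.deg (fun x => P x - x) B 0 := by
    set H : (ℝ × ℝ) × ℝ → ℝ × ℝ := fun q =>
      (Real.cos (Real.pi * q.2) * (q.1 - P q.1).1
         - Real.sin (Real.pi * q.2) * (q.1 - P q.1).2,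
       Real.sin (Real.pi * q.2) * (q.1 - P q.1).1
         + Real.cos (Real.pi * q.2) * (q.1 - P q.1).2) with hH
    have hvcont : ContinuousOn (fun q : (ℝ × ℝ) × ℝ => q.1 - P q.1)
        (closure B ×ˢ Icc (0:ℝ) 1) := continuousOn_fst.sub hPfst
    have hcos : Continuous (fun q : (ℝ × ℝ) × ℝ => Real.cos (Real.pi * q.2)) :=
      Real.continuous_cos.comp (continuous_const.mul continuous_snd)
    have hsin : Continuous (fun q : (ℝ × ℝ) × ℝ => Real.sin (Real.pi * q.2)) :=
      Real.continuous_sin.comp (continuous_const.mul continuous_snd)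
    have hHcont : ContinuousOn H (closure B ×ˢ Icc (0:ℝ) 1) := by
      apply ContinuousOn.prodMk
      · exact (hcos.continuousOn.mul (hvcont.fst)).sub
          (hsin.continuousOn.mul (hvcont.snd))
      · exact (hsin.continuousOn.mul (hvcont.fst)).add
          (hcos.continuousOn.mul (hvcont.snd))
    have hHfr : ∀ x ∈ frontier B, ∀ t ∈ Icc (0:ℝ) 1, H (x, t) ≠ 0 := by
      intro x hx t _ hcontra
      have hv : x - P x ≠ 0 := sub_ne_zero.mpr (Ne.symm (hPb x hx).2)
      set a := (x - P x).1
      set b := (x - P x).2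
      have h1 : Real.cos (Real.pi * t) * a - Real.sin (Real.pi * t) * b = 0 :=
        congrArg Prod.fst hcontra
      have h2 : Real.sin (Real.pi * t) * a + Real.cos (Real.pi * t) * b = 0 :=
        congrArg Prod.snd hcontra
      have pyth := Real.sin_sq_add_cos_sq (Real.pi * t)
      have ha : a = 0 := by
        linear_combination Real.cos (Real.pi * t) * h1
          + Real.sin (Real.pi * t) * h2 - a * pyth
      have hb : b = 0 := by
        linear_combination (-(Real.sin (Real.pi * t))) * h1
          + Real.cos (Real.pi * t) * h2 - b * pyth
      exact hv (Prod.ext ha hb)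
    have := D.deg_homotopy H B 0 hB hbdd hHcont hHfr
    have h0 : (fun x => H (x, 0)) = fun x => x - P x := by
      funext x
      simp only [hH, mul_zero, Real.cos_zero, Real.sin_zero, one_mul, zero_mul,
        sub_zero, zero_add]
    have h1 : (fun x => H (x, 1)) = fun x => P x - x := by
      funext x
      simp only [hH, mul_one, Real.cos_pi, Real.sin_pi, zero_mul, sub_zero,
        zero_add, neg_one_mul]
      exact Prod.ext (by simp [neg_sub]) (by simp [neg_sub])
    rwa [h0, h1] at this
  -- Step 2 : Rothe homotopy, deg (x - P x) = deg (x - c)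
  have step2 : D.deg (fun x => x - c) B 0 = D.deg (fun x => x - P x) B 0 := by
    set H : (ℝ × ℝ) × ℝ → ℝ × ℝ :=
      fun q => q.1 - e (q.2 • e.symm (P q.1)) with hH
    have hHcont : ContinuousOn H (closure B ×ˢ Icc (0:ℝ) 1) := by
      apply continuousOn_fst.sub
      exact e.continuous.comp_continuousOn
        (continuousOn_snd.smul (e.continuous_symm.comp_continuousOn hPfst))
    have hHfr : ∀ x ∈ frontier B, ∀ t ∈ Icc (0:ℝ) 1, H (x, t) ≠ 0 := by
      intro x hx t ht hcontra
      have hxe : x = e (t • e.symm (P x)) := by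
        have := sub_eq_zero.mp hcontra
        exact this
      have hy : ‖e.symm (P x)‖ ≤ 1 := hsymm_cl _ ((hPb x hx).1)
      have hx1 : ‖e.symm x‖ = 1 := hsymm_fr x hx
      have hsx : e.symm x = t • e.symm (P x) := by
        have h := congrArg e.symm hxe
        simpa using h
      have hnorm : (1:ℝ) = |t| * ‖e.symm (P x)‖ := by
        rw [← hx1, hsx, norm_smul, Real.norm_eq_abs]
      have ht0 : 0 ≤ t := ht.1
      have ht1 : t ≤ 1 := ht.2
      have habs : |t| = t := abs_of_nonneg ht0
      have hteq : t = 1 := by nlinarith [hy, hnorm]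
      have hyeq : ‖e.symm (P x)‖ = 1 := by nlinarith [hnorm]
      have : e.symm x = e.symm (P x) := by
        rw [hsx, hteq, one_smul]
      have : x = P x := by
        have := congrArg e this
        simpa using this
      exact (hPb x hx).2 this.symm
    have := D.deg_homotopy H B 0 hB hbdd hHcont hHfr
    have h0 : (fun x => H (x, 0)) = fun x => x - c := by
      funext x; simp [hH, hc]
    have h1 : (fun x => H (x, 1)) = fun x => x - P x := by
      funext x; simp [hH]
    rwa [h0, h1] at this
  -- Step 3 : deg (x - c) B 0 = 1 via excision on a large ball
  have step3 : D.deg (fun x => x - c) B 0 = 1 := by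
    obtain ⟨r, hr⟩ := hclC.isBounded.subset_closedBall 0
    have hcr : ‖c‖ ≤ r := by
      simpa [mem_closedBall_zero_iff] using hr (subset_closure hcB)
    have hr0 : 0 ≤ r := le_trans (norm_nonneg c) hcr
    set R : ℝ := r + 1 with hRdef
    have hR0 : (0:ℝ) < R := by linarith
    set V : Set (ℝ × ℝ) := Metric.ball 0 R with hV
    have hVo : IsOpen V := Metric.isOpen_ball
    have hVb : IsBounded V := Metric.isBounded_ball
    have hBV : B ⊆ V := fun x hx => by
      have : ‖x‖ ≤ r := by
        simpa [mem_closedBall_zero_iff] using hr (subset_closure hx)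
      simp only [hV, Metric.mem_ball, dist_zero_right]
      linarith
    have hgc : ContinuousOn (fun x : ℝ × ℝ => x - c) (closure V) :=
      (continuous_id.sub continuous_const).continuousOn
    -- degree on the empty set is zero
    have hempty : D.deg (fun x : ℝ × ℝ => x - c) ∅ 0 = 0 := by
      by_contra h
      obtain ⟨x, hx, -⟩ := D.deg_exists (fun x : ℝ × ℝ => x - c) ∅ 0
        isOpen_empty Bornology.isBounded_empty
        ((continuous_id.sub continuous_const).continuousOn) h
      exact hx
    -- additivity / excision
    have hadd : D.deg (fun x : ℝ × ℝ => x - c) V 0 =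
        D.deg (fun x : ℝ × ℝ => x - c) B 0 +
        D.deg (fun x : ℝ × ℝ => x - c) ∅ 0 := by
      apply D.deg_additive (fun x : ℝ × ℝ => x - c) V B ∅ 0 hVo hB isOpen_empty
        hVb hBV (empty_subset V) (disjoint_empty B) hgc
      intro x hx hzero
      have : x = c := sub_eq_zero.mp hzero
      exact hx.2 (Or.inl (this ▸ hcB))
    -- degree of the translation on the big ball
    have hVdeg : D.deg (fun x : ℝ × ℝ => x - c) V 0 = 1 := by
      set H : (ℝ × ℝ) × ℝ → ℝ × ℝ := fun q => q.1 - q.2 • c with hH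
      have hHcont : ContinuousOn H (closure V ×ˢ Icc (0:ℝ) 1) :=
        (continuous_fst.sub (continuous_snd.smul continuous_const)).continuousOn
      have hHfr : ∀ x ∈ frontier V, ∀ t ∈ Icc (0:ℝ) 1, H (x, t) ≠ 0 := by
        intro x hx t ht hcontra
        have hxR : ‖x‖ = R := by
          have : x ∈ Metric.sphere (0:ℝ × ℝ) R := by
            rw [hV, frontier_ball 0 (ne_of_gt hR0)] at hx
            exact hx
          simpa [mem_sphere_zero_iff_norm] using this
        have : x = t • c := sub_eq_zero.mp hcontra
        have : ‖x‖ = |t| * ‖c‖ := by rw [this, norm_smul, Real.norm_eq_abs]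
        have habs : |t| = t := abs_of_nonneg ht.1
        nlinarith [ht.2, ht.1, hcr, norm_nonneg c]
      have := D.deg_homotopy H V 0 hVo hVb hHcont hHfr
      have h0 : (fun x => H (x, 0)) = id := by
        funext x; simp [hH]
      have h1 : (fun x => H (x, 1)) = fun x : ℝ × ℝ => x - c := by
        funext x; simp [hH]
      rw [h0, h1] at this
      rw [← this]
      exact D.deg_id V 0 hVo hVb (by simpa [hV] using hR0)
    rw [hVdeg, hempty, add_zero] at hadd
    exact hadd.symm
  rw [← step1, ← step2, step3]
end
end

section
/- Let U ⊆ ℝ² be open and bounded with 0 ∉ ∂U, and let F: Ψ⁻¹(∂U) → ℝ² be continuous, 2π-periodic in the first variable, with F(θ,r) ≠ v for all (θ,r) ∈ Ψ⁻¹(∂U). Then the degree 𝔇(F, U, v) := deg(F_ext ∘ Ψ⁻¹, U, v) is well defined, i.e., independent of the choice of the continuous extension F_ext: ℝ × [0,∞) → ℝ² that is 2π-periodic in the first variable, agrees with F on Ψ⁻¹(∂U), and is constant on ℝ × {0}. -/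
noncomputable section

open Set Metric Bornology

/-- The angle is `-arg x` because `Ψ` runs clockwise. -/
lemma exists_pos_psiP_eq {x : ℝ × ℝ} (hx : x ≠ 0) : ∃ p : ℝ × ℝ, 0 < p.2 ∧ PsiP p = x := by
  set z : ℂ := ⟨x.1, x.2⟩
  have hz : z ≠ 0 := fun h => hx (Prod.ext (congrArg Complex.re h) (congrArg Complex.im h))
  refine ⟨(-z.arg, ‖z‖), norm_pos_iff.mpr hz, ?_⟩
  simp only [PsiP, Real.cos_neg, Real.sin_neg, mul_neg, neg_neg,
    Complex.norm_mul_cos_arg, Complex.norm_mul_sin_arg]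
  rfl

lemma subset_psiP_image_preE {E : Set (ℝ × ℝ)} (h0 : (0 : ℝ × ℝ) ∉ E) :
    E ⊆ PsiP '' preE E := by
  intro x hx
  obtain ⟨p, hp, rfl⟩ := exists_pos_psiP_eq (ne_of_mem_of_not_mem hx h0)
  exact ⟨p, ⟨hp, hx⟩, rfl⟩

theorem statement5_general (D : DegTheory) (U : Set (ℝ × ℝ)) (F : ℝ × ℝ → ℝ × ℝ) (v : ℝ × ℝ)
    (hU : IsOpen U) (hUb : IsBounded U) (h0 : (0 : ℝ × ℝ) ∉ frontier U)
    (hFv : ∀ p ∈ preE (frontier U), F p ≠ v)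
    (g₁ g₂ : ℝ × ℝ → ℝ × ℝ)
    (h₁ : IsDExt F U g₁) (h₂ : IsDExt F U g₂) :
    D.deg g₁ U v = D.deg g₂ U v := by
  obtain ⟨hg₁c, hg₁⟩ := h₁
  obtain ⟨hg₂c, hg₂⟩ := h₂
  refine D.deg_congr g₁ g₂ U v hU hUb hg₁c.continuousOn hg₂c.continuousOn ?_ ?_
  · intro x hx
    obtain ⟨p, hp, rfl⟩ := subset_psiP_image_preE h0 hx
    rw [hg₁ p hp, hg₂ p hp]
  · intro x hx
    obtain ⟨p, hp, rfl⟩ := subset_psiP_image_preE h0 hx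
    rw [hg₁ p hp]
    exact hFv p hp

/-- the degree `𝔇(F,U,v) = deg(F_ext ∘ Ψ⁻¹, U, v)` is well defined:
any two admissible extensions of `F` yield the same Brouwer degree. -/
theorem statement5 (D : DegTheory) (U : Set (ℝ × ℝ)) (F : ℝ × ℝ → ℝ × ℝ) (v : ℝ × ℝ)
    (hU : IsOpen U) (hUb : IsBounded U) (h0 : (0 : ℝ × ℝ) ∉ frontier U)
    (hFc : ContinuousOn F (preE (frontier U))) (hFper : PerOn F (frontier U))
    (hFv : ∀ p ∈ preE (frontier U), F p ≠ v)
    (g₁ g₂ : ℝ × ℝ → ℝ × ℝ)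
    (h₁ : IsDExt F U g₁) (h₂ : IsDExt F U g₂) :
    D.deg g₁ U v = D.deg g₂ U v :=
  statement5_general D U F v hU hUb h0 hFv g₁ g₂ h₁ h₂
end
end

section
/- Consider the flow given in clockwise polar coordinates by Φ(t, (θ, r)) = (θ + r t, r(1 + t)) and the induced planar map φ(T, ·) for T > 0, with f_T(x) = φ(T, x) − x. Then for every radius ρ > 0, deg(f_T, B_ρ, 0) = 1, where B_ρ is the open ball of radius ρ centered at the origin. -/
noncomputable section

open Set Metric Bornology

/-- The planar map given in clockwise polar coordinates by
`Φ(t,(θ,r)) = (θ + rt, r(1+t))`. -/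
def phiSpiral (t : ℝ) (x : ℝ × ℝ) : ℝ × ℝ :=
  (1 + t) • (x.1 * Real.cos (sqnorm x * t) + x.2 * Real.sin (sqnorm x * t),
    -(x.1 * Real.sin (sqnorm x * t)) + x.2 * Real.cos (sqnorm x * t))

/-!
Push `id` to `f_T` through `H(x, s) = φ(sT, x) - s x`. On the circle `|x| = ρ` the map `φ(sT, ·)`
stretches `x` by `1 + sT` while `s x` has length `s ρ`, and `s < 1 + sT` for `s ∈ [0, 1]`, so
`H` has no zero on the boundary and the degree stays equal to `deg(id, B_ρ, 0) = 1`.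
-/

theorem DegTheory.deg_eq_one_of_homotopy_id (D : DegTheory) {U : Set (ℝ × ℝ)} {v : ℝ × ℝ}
    (H : (ℝ × ℝ) × ℝ → ℝ × ℝ) (hU : IsOpen U) (hUb : IsBounded U) (hv : v ∈ U)
    (hH : ContinuousOn H (closure U ×ˢ Icc 0 1)) (hH₀ : ∀ x, H (x, 0) = x)
    (hfr : ∀ x ∈ frontier U, ∀ s ∈ Icc (0 : ℝ) 1, H (x, s) ≠ v) :
    D.deg (fun x => H (x, 1)) U v = 1 := by
  rw [← D.deg_homotopy H U v hU hUb hH hfr, funext hH₀]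
  exact D.deg_id U v hU hUb hv

lemma continuous_sqnorm : Continuous sqnorm :=
  Real.continuous_sqrt.comp (by fun_prop)

lemma continuous_phiSpiral : Continuous fun q : ℝ × (ℝ × ℝ) => phiSpiral q.1 q.2 := by
  have := continuous_sqnorm
  unfold phiSpiral
  fun_prop

lemma phiSpiral_zero (x : ℝ × ℝ) : phiSpiral 0 x = x := by
  simp [phiSpiral]

lemma phiSpiral_normSq (t : ℝ) (x : ℝ × ℝ) :
    (phiSpiral t x).1 ^ 2 + (phiSpiral t x).2 ^ 2 = (1 + t) ^ 2 * (x.1 ^ 2 + x.2 ^ 2) := by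
  simp only [phiSpiral, Prod.smul_fst, Prod.smul_snd, smul_eq_mul]
  nlinarith [Real.sin_sq_add_cos_sq (sqnorm x * t)]

lemma phiSpiral_ne_smul {t c : ℝ} {x : ℝ × ℝ} (hx : x.1 ^ 2 + x.2 ^ 2 ≠ 0) (hc : |c| < 1 + t) :
    phiSpiral t x ≠ c • x := by
  intro h
  have hsq : (1 + t) ^ 2 * (x.1 ^ 2 + x.2 ^ 2) = c ^ 2 * (x.1 ^ 2 + x.2 ^ 2) := by
    rw [← phiSpiral_normSq, h, Prod.smul_fst, Prod.smul_snd, smul_eq_mul, smul_eq_mul]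
    ring
  have habs : |1 + t| = |c| := sq_eq_sq_iff_abs_eq_abs _ _ |>.mp (mul_right_cancel₀ hx hsq)
  linarith [le_abs_self (1 + t)]

lemma isOpen_ball2 (ρ : ℝ) : IsOpen (ball2 ρ) :=
  isOpen_lt (by fun_prop) continuous_const

lemma isBounded_ball2 (ρ : ℝ) : IsBounded (ball2 ρ) := by
  refine isBounded_iff_forall_norm_le.mpr ⟨|ρ|, fun x (hx : x.1 ^ 2 + x.2 ^ 2 < ρ ^ 2) => ?_⟩
  rw [Prod.norm_def, Real.norm_eq_abs, Real.norm_eq_abs, max_le_iff, ← sq_le_sq, ← sq_le_sq]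
  constructor <;> nlinarith [sq_nonneg x.1, sq_nonneg x.2]

lemma zero_mem_ball2 {ρ : ℝ} (hρ : 0 < ρ) : (0 : ℝ × ℝ) ∈ ball2 ρ := by
  simpa [ball2] using pow_pos hρ 2

lemma frontier_ball2_subset (ρ : ℝ) : frontier (ball2 ρ) ⊆ sphere2 ρ :=
  frontier_lt_subset_eq (by fun_prop) continuous_const

/-- for the flow `Φ(t,(θ,r)) = (θ + rt, r(1+t))` and any `T > 0`,
`deg(f_T, B_ρ, 0) = 1` for every radius `ρ > 0`, where `f_T = φ(T,·) - id`. -/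
theorem statement17 (D : DegTheory) (T : ℝ) (hT : 0 < T) (ρ : ℝ) (hρ : 0 < ρ) :
    D.deg (fun x => phiSpiral T x - x) (ball2 ρ) 0 = 1 := by
  set H : (ℝ × ℝ) × ℝ → ℝ × ℝ := fun q => phiSpiral (q.2 * T) q.1 - q.2 • q.1
  have hH : Continuous H :=
    (continuous_phiSpiral.comp
      (by fun_prop : Continuous fun q : (ℝ × ℝ) × ℝ => (q.2 * T, q.1))).sub (by fun_prop)
  have hfr : ∀ x ∈ frontier (ball2 ρ), ∀ s ∈ Icc (0 : ℝ) 1, H (x, s) ≠ 0 := by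
    rintro x hx s ⟨hs₀, hs₁⟩
    have hxρ : x.1 ^ 2 + x.2 ^ 2 = ρ ^ 2 := frontier_ball2_subset ρ hx
    have hs : |s| < 1 + s * T := by
      rw [abs_of_nonneg hs₀]
      nlinarith [mul_nonneg hs₀ hT.le, mul_nonneg hs₀ (sub_nonneg.2 hs₁), mul_pos hT hT]
    exact sub_ne_zero.mpr (phiSpiral_ne_smul (by rw [hxρ]; positivity) hs)
  simpa [H] using D.deg_eq_one_of_homotopy_id H (isOpen_ball2 ρ) (isBounded_ball2 ρ)
    (zero_mem_ball2 hρ) hH.continuousOn (fun x => by simp [H, phiSpiral_zero]) hfr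
end
end
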